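/- Let ε_1,…,ε_n be iid Rademacher random variables independent of the iid uniform indices ω_1,…,ω_n. Then for every t > 0, P{ ‖X̄ − A‖_{∘,δ} ≥ 3t } ≤ exp( −n t² / (4 d_*^k ‖A‖_max²) ) + exp( −(3/4)·δ_**²·n t / (d_*^k δ_*^k ‖A‖_max) ) + 4·P{ ‖(1/n)·Σ_{i=1}^n ε_i X_i‖_{∘,δ} ≥ t }. -/

import Mathlib

/-!
For a fixed `Y ∈ U(δ)` the scalar `⟨Y, X̄ - A⟩` is an average of `n` i.i.d. centred variables
`d_*^k Y(ω) A(ω) - ⟨Y, A⟩`, bounded by `d_*^k δ_*^k ‖A‖_max / δ_**²` (at most two factors of a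
rank-one `Y ∈ U(δ)` escape the incoherence bound) and of second moment at most
`d_*^k ‖A‖_max²`; Bernstein's inequality bounds `P{⟨Y, X̄ - A⟩ ≥ t}` by the sum `p` of the two
exponentials.

Symmetrization with a ghost sample `ω'`: `U(δ)` is compact, so `‖X̄ - A‖_{∘,δ} ≥ 3t` is attained
at some `Y`, and with probability at least `1 - p` the ghost average satisfies
`⟨Y, X̄' - A⟩ < t`, whence `‖X̄ - X̄'‖_{∘,δ} > 2t`. Exchanging `ω_i` and `ω'_i` wherever
`ε_i = -1` preserves the law of the pair and turns `X̄ - X̄'` into a difference of two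
Rademacher averages, one of which must have norm at least `t`. Hence
`(1 - p) P{‖X̄ - A‖_{∘,δ} ≥ 3t} ≤ 2 P{‖n⁻¹ Σ ε_i X_i‖_{∘,δ} ≥ t}`.
-/

open scoped BigOperators

namespace IncoherentTensor

variable {k : ℕ}

/-- A `k`-th order tensor in `ℝ^{d 1 × ⋯ × d k}`. -/
abbrev Tensor (d : Fin k → ℕ) : Type := (∀ j, Fin (d j)) → ℝ

variable {d : Fin k → ℕ}

/-- Entrywise inner product of tensors. -/
noncomputable def tinner (X Y : Tensor d) : ℝ := ∑ a : ∀ j, Fin (d j), X a * Y a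

/-- Hilbert–Schmidt (entrywise ℓ2) norm. -/
noncomputable def hsNorm (X : Tensor d) : ℝ := Real.sqrt (tinner X X)

/-- Largest absolute entry. -/
noncomputable def maxNorm (X : Tensor d) : ℝ := ⨆ a, |X a|

/-- Euclidean norm of a vector. -/
noncomputable def l2 {n : ℕ} (u : Fin n → ℝ) : ℝ := Real.sqrt (∑ i, u i ^ 2)

/-- Supremum norm of a vector. -/
noncomputable def linf {n : ℕ} (u : Fin n → ℝ) : ℝ := ⨆ i, |u i|

/-- Rank-one tensor `u_1 ⊗ ⋯ ⊗ u_k`. -/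
def rankOne (u : ∀ j, Fin (d j) → ℝ) : Tensor d := fun a => ∏ j, u j (a j)

/-- Tensor spectral norm. -/
noncomputable def spectralNorm (X : Tensor d) : ℝ :=
  sSup {r | ∃ u : ∀ j, Fin (d j) → ℝ, (∀ j, l2 (u j) ≤ 1) ∧ r = tinner X (rankOne u)}

/-- Tensor nuclear norm. -/
noncomputable def nuclearNorm (X : Tensor d) : ℝ :=
  sSup {r | ∃ Y : Tensor d, spectralNorm Y ≤ 1 ∧ r = tinner X Y}

/-- The set `U(δ)` of rank-one tensors satisfying the incoherence constraints in all but
two directions. -/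
def Uset (δ : Fin k → ℝ) : Set (Tensor d) :=
  {Y | ∃ j1 j2 : Fin k, j1 < j2 ∧ ∃ u : ∀ j, Fin (d j) → ℝ,
    (∀ j, l2 (u j) ≤ 1) ∧ (∀ j, j ≠ j1 → j ≠ j2 → linf (u j) ≤ δ j) ∧ Y = rankOne u}

/-- Incoherent spectral norm `‖X‖_{∘,δ}`. -/
noncomputable def onorm (δ : Fin k → ℝ) (X : Tensor d) : ℝ :=
  sSup {r | ∃ Y ∈ Uset (d := d) δ, r = tinner Y X}

/-- Incoherent nuclear norm `‖X‖_{⋆,δ}`. -/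
noncomputable def starNorm (δ : Fin k → ℝ) (X : Tensor d) : ℝ :=
  sSup {r | ∃ Y : Tensor d, onorm δ Y ≤ 1 ∧ r = tinner Y X}

/-- The span `L_j(X)` of the mode-`j` fibers of `X`. -/
noncomputable def fiberSpan (X : Tensor d) (j : Fin k) :
    Submodule ℝ (EuclideanSpace ℝ (Fin (d j))) :=
  Submodule.span ℝ {v | ∃ a : ∀ i, Fin (d i), v = fun i => X (Function.update a j i)}

/-- Tucker rank `r_j(X) = dim L_j(X)`. -/
noncomputable def tuckerRank (X : Tensor d) (j : Fin k) : ℕ :=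
  Module.finrank ℝ (fiberSpan X j)

/-- Orthogonal projection `P_j(X)` of `ℝ^{d_j}` onto `L_j(X)`. -/
noncomputable def projMode (X : Tensor d) (j : Fin k) :
    EuclideanSpace ℝ (Fin (d j)) →L[ℝ] EuclideanSpace ℝ (Fin (d j)) :=
  (fiberSpan X j).subtypeL.comp ((fiberSpan X j).orthogonalProjection)

/-- The matrix of `P_j(X)` in the standard basis. -/
noncomputable def Pmat (X : Tensor d) (j : Fin k) : Matrix (Fin (d j)) (Fin (d j)) ℝ :=
  Matrix.of fun a b => projMode X j (EuclideanSpace.single b 1) a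

/-- Action of a Kronecker product `A_1 ⊗ ⋯ ⊗ A_k` of matrices on a tensor. -/
noncomputable def kronApply (A : ∀ j, Matrix (Fin (d j)) (Fin (d j)) ℝ) (W : Tensor d) :
    Tensor d :=
  fun a => ∑ b : ∀ j, Fin (d j), (∏ j, A j (a j) (b j)) * W b

/-- `Q⁰_X = P_1 ⊗ ⋯ ⊗ P_k`. -/
noncomputable def Q0 (X : Tensor d) (W : Tensor d) : Tensor d :=
  kronApply (fun j => Pmat X j) W

/-- `Q_X = Q⁰_X + Σ_j P_1 ⊗ ⋯ ⊗ P_j^⊥ ⊗ ⋯ ⊗ P_k`. -/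
noncomputable def QX (X : Tensor d) (W : Tensor d) : Tensor d :=
  Q0 X W + ∑ j : Fin k, kronApply (fun l => if l = j then 1 - Pmat X l else Pmat X l) W

/-- `Q_X^⊥ = I − Q_X`. -/
noncomputable def Qperp (X : Tensor d) (W : Tensor d) : Tensor d := W - QX X W

/-- Coherence `μ(U)` of a subspace of `ℝ^n`. -/
noncomputable def coherence {n : ℕ} (U : Submodule ℝ (EuclideanSpace ℝ (Fin n))) : ℝ :=
  ((n : ℝ) / (Module.finrank ℝ U : ℝ)) *
    ⨆ i : Fin n, ‖U.orthogonalProjection (EuclideanSpace.single i 1)‖ ^ 2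

/-- Probability of an event on a finite sample space, under the uniform distribution. -/
noncomputable def prob {Ω : Type*} [Fintype Ω] (P : Ω → Prop) : ℝ :=
  (Nat.card {ω : Ω // P ω} : ℝ) / (Fintype.card Ω : ℝ)

/-- `P_ω X` retains the entry `ω` of `X` and zeroes out the rest. -/
noncomputable def Pentry (ω : ∀ j, Fin (d j)) (X : Tensor d) : Tensor d :=
  fun a => if a = ω then X a else 0

/-- `P_Ω X` retains the entries of `X` on `Ω` and zeroes out the rest. -/
noncomputable def POmega (S : Finset (∀ j, Fin (d j))) (X : Tensor d) : Tensor d :=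
  fun a => if a ∈ S then X a else 0

/-- The empirical average `X̄ = (X_1 + ⋯ + X_n)/n` of `X_i = (d_1⋯d_k)·P_{ω_i} A`. -/
noncomputable def sampleAvg (A : Tensor d) (n : ℕ) (s : Fin n → ∀ j, Fin (d j)) : Tensor d :=
  fun a => (1 / (n : ℝ)) * ∑ i : Fin n, (∏ j, (d j : ℝ)) * Pentry (s i) A a

/-- `Y` is `μ`-incoherent. -/
noncomputable def muIncoherent (μ : ℝ) (Y : Tensor d) : Prop :=
  ∀ j, ∀ u : EuclideanSpace ℝ (Fin (d j)), ‖u‖ ≤ 1 →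
    linf (fun i => projMode Y j u i) ≤ Real.sqrt (μ * (tuckerRank Y j : ℝ) / (d j : ℝ))

open Finset

section Vectors

variable {m : ℕ}

lemma abs_le_l2 (u : Fin m → ℝ) (i : Fin m) : |u i| ≤ l2 u := by
  rw [l2, ← Real.sqrt_sq_eq_abs]
  exact Real.sqrt_le_sqrt (single_le_sum (fun j _ => sq_nonneg (u j)) (mem_univ i))

lemma abs_le_linf (u : Fin m → ℝ) (i : Fin m) : |u i| ≤ linf u :=
  le_ciSup (f := fun i => |u i|) (Set.finite_range _).bddAbove i

lemma linf_le_iff {u : Fin m → ℝ} {c : ℝ} (hc : 0 ≤ c) : linf u ≤ c ↔ ∀ i, |u i| ≤ c :=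
  ⟨fun h i => (abs_le_linf u i).trans h, fun h => Real.iSup_le h hc⟩

end Vectors

section Uset

variable {δ : Fin k → ℝ}

lemma isCompact_Uset (hδ : ∀ j, 0 ≤ δ j) : IsCompact (Uset (d := d) δ) := by
  set K : Set (∀ j, Fin (d j) → ℝ) := {u | ∃ j1 j2 : Fin k, j1 < j2 ∧ (∀ j, l2 (u j) ≤ 1) ∧
    ∀ j, j ≠ j1 → j ≠ j2 → ∀ i, |u j i| ≤ δ j}
  have hK : IsCompact K := by
    refine (isCompact_univ_pi fun j => isCompact_univ_pi fun i =>
      isCompact_Icc (a := -1) (b := 1)).of_isClosed_subset ?_ ?_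
    · simp only [K, Set.ofPred_exists, Set.ofPred_and, Set.ofPred_forall]
      refine isClosed_iUnion_of_finite fun j1 => isClosed_iUnion_of_finite fun j2 =>
        isClosed_const.inter ((isClosed_iInter fun j => isClosed_le (by unfold l2; fun_prop)
          continuous_const).inter (isClosed_iInter fun j => isClosed_iInter fun _ =>
          isClosed_iInter fun _ => isClosed_iInter fun i => isClosed_le (by fun_prop)
          continuous_const))
    · rintro u ⟨-, -, -, hu, -⟩ j - i -
      exact abs_le.mp ((abs_le_l2 _ i).trans (hu j))
  convert hK.image (f := rankOne) (by unfold rankOne; fun_prop) using 1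
  ext Y
  simp only [Uset, K, Set.mem_image, Set.mem_ofPred_eq, linf_le_iff (hδ _)]
  constructor
  · rintro ⟨j1, j2, h12, u, hu, hδu, rfl⟩
    exact ⟨u, ⟨j1, j2, h12, hu, hδu⟩, rfl⟩
  · rintro ⟨u, ⟨j1, j2, h12, hu, hδu⟩, rfl⟩
    exact ⟨j1, j2, h12, u, hu, hδu, rfl⟩

lemma zero_mem_Uset (hk : 2 ≤ k) (hδ : ∀ j, 0 ≤ δ j) : (0 : Tensor d) ∈ Uset δ := by
  refine ⟨⟨0, by omega⟩, ⟨1, by omega⟩, Fin.mk_lt_mk.mpr one_pos, 0, fun j => ?_,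
    fun j _ _ => ?_, ?_⟩
  · simp [l2]
  · exact (linf_le_iff (hδ j)).mpr fun _ => by simpa using hδ j
  · ext a
    simp [rankOne, prod_const, zero_pow (by omega : k ≠ 0)]

lemma neg_mem_Uset {Y : Tensor d} (hY : Y ∈ Uset δ) : -Y ∈ Uset δ := by
  obtain ⟨j1, j2, h12, u, hu, hδu, rfl⟩ := hY
  set c : Fin k → ℝ := fun j => if j = j1 then -1 else 1
  have hc : ∀ j, |c j| = 1 := fun j => by by_cases h : j = j1 <;> simp [c, h]
  refine ⟨j1, j2, h12, fun j i => c j * u j i, fun j => ?_, fun j h1 h2 => ?_, ?_⟩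
  · simpa [l2, mul_pow, ← sq_abs (c j), hc] using hu j
  · simpa [linf, abs_mul, hc] using hδu j h1 h2
  · ext a
    simp only [rankOne, Pi.neg_apply, prod_mul_distrib, c, prod_ite_eq', mem_univ, if_true,
      neg_one_mul]

lemma sum_sq_le_one_of_mem_Uset {Y : Tensor d} (hY : Y ∈ Uset δ) : ∑ a, Y a ^ 2 ≤ 1 := by
  obtain ⟨-, -, -, u, hu, -, rfl⟩ := hY
  calc ∑ a, rankOne u a ^ 2 = ∏ j, ∑ i, u j i ^ 2 := by
        simp only [rankOne, ← prod_pow]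
        rw [prod_univ_sum, Fintype.piFinset_univ]
    _ ≤ 1 := prod_le_one (fun j _ => by positivity) fun j _ => Real.sqrt_le_one.mp (hu j)

lemma exists_abs_mul_le_prod_of_mem_Uset (hδ : ∀ j, 0 ≤ δ j) {Y : Tensor d}
    (hY : Y ∈ Uset δ) : ∃ j1 j2 : Fin k, j1 ≠ j2 ∧ ∀ a, |Y a| * (δ j1 * δ j2) ≤ ∏ j, δ j := by
  obtain ⟨j1, j2, h12, u, hu, hδu, rfl⟩ := hY
  refine ⟨j1, j2, h12.ne, fun a => ?_⟩
  set s : Finset (Fin k) := {j1, j2}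
  have hs : ∏ j ∈ s, |u j (a j)| ≤ 1 :=
    prod_le_one (fun j _ => abs_nonneg _) fun j _ => (abs_le_l2 _ _).trans (hu j)
  have hsc : ∏ j ∈ sᶜ, |u j (a j)| ≤ ∏ j ∈ sᶜ, δ j := by
    refine prod_le_prod (fun j _ => abs_nonneg _) fun j hj => ?_
    simp only [s, mem_compl, mem_insert, mem_singleton, not_or] at hj
    exact (abs_le_linf _ _).trans (hδu j hj.1 hj.2)
  calc |rankOne u a| * (δ j1 * δ j2)
      = (∏ j ∈ s, |u j (a j)|) * (∏ j ∈ sᶜ, |u j (a j)|) * ∏ j ∈ s, δ j := by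
        rw [prod_mul_prod_compl, rankOne, abs_prod, prod_pair h12.ne]
    _ ≤ 1 * (∏ j ∈ sᶜ, δ j) * ∏ j ∈ s, δ j := by
        gcongr
        exact prod_nonneg fun j _ => hδ j
    _ = ∏ j, δ j := by rw [one_mul, mul_comm, prod_mul_prod_compl]

end Uset

section Onorm

variable {δ : Fin k → ℝ}

lemma tinner_sub_right (Y X Z : Tensor d) : tinner Y (X - Z) = tinner Y X - tinner Y Z := by
  simp [tinner, mul_sub, sum_sub_distrib]

lemma tinner_neg_left (Y X : Tensor d) : tinner (-Y) X = -tinner Y X := by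
  simp [tinner, sum_neg_distrib]

lemma continuous_tinner_left (X : Tensor d) : Continuous fun Y : Tensor d => tinner Y X := by
  unfold tinner; fun_prop

lemma onorm_eq_sSup_image (X : Tensor d) :
    onorm δ X = sSup ((fun Y => tinner Y X) '' Uset δ) := by
  simp only [onorm, Set.image, eq_comm]

lemma le_onorm (hδ : ∀ j, 0 ≤ δ j) {Y : Tensor d} (hY : Y ∈ Uset δ) (X : Tensor d) :
    tinner Y X ≤ onorm δ X := by
  rw [onorm_eq_sSup_image]
  exact le_csSup (((isCompact_Uset hδ).image (continuous_tinner_left X)).bddAbove)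
    (Set.mem_image_of_mem _ hY)

lemma exists_tinner_eq_onorm (hk : 2 ≤ k) (hδ : ∀ j, 0 ≤ δ j) (X : Tensor d) :
    ∃ Y ∈ Uset δ, tinner Y X = onorm δ X := by
  rw [onorm_eq_sSup_image]
  exact ((isCompact_Uset hδ).image (continuous_tinner_left X)).sSup_mem
    (Set.Nonempty.image _ ⟨0, zero_mem_Uset hk hδ⟩)

lemma onorm_sub_le (hk : 2 ≤ k) (hδ : ∀ j, 0 ≤ δ j) (X Z : Tensor d) :
    onorm δ (X - Z) ≤ onorm δ X + onorm δ Z := by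
  obtain ⟨Y, hY, hYeq⟩ := exists_tinner_eq_onorm hk hδ (X - Z)
  rw [← hYeq, tinner_sub_right, sub_eq_add_neg, ← tinner_neg_left]
  exact add_le_add (le_onorm hδ hY X) (le_onorm hδ (neg_mem_Uset hY) Z)

end Onorm

section Prob

variable {Ω α α' β : Type*} [Fintype Ω] [Fintype α] [Fintype α'] [Fintype β]

lemma prob_eq_sum (P : Ω → Prop) [DecidablePred P] :
    prob P = (∑ ω, if P ω then (1 : ℝ) else 0) / Fintype.card Ω := by
  rw [prob, Nat.card_eq_fintype_card, Fintype.card_subtype, card_filter]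
  push_cast
  rfl

lemma prob_nonneg (P : Ω → Prop) : 0 ≤ prob P := by
  unfold prob; positivity

lemma prob_le_one (P : Ω → Prop) : prob P ≤ 1 := by
  classical
  rw [prob, Nat.card_eq_fintype_card]
  exact div_le_one_of_le₀ (by exact_mod_cast Fintype.card_subtype_le P) (Nat.cast_nonneg _)

lemma prob_mono {P Q : Ω → Prop} (h : ∀ ω, P ω → Q ω) : prob P ≤ prob Q := by
  classical
  rw [prob_eq_sum, prob_eq_sum]
  gcongr with ω
  split_ifs <;> simp_all

lemma prob_or_le (P Q : Ω → Prop) : prob (fun ω => P ω ∨ Q ω) ≤ prob P + prob Q := by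
  classical
  rw [prob_eq_sum, prob_eq_sum, prob_eq_sum, ← add_div, ← sum_add_distrib]
  gcongr with ω
  split_ifs <;> simp_all

lemma prob_not [Nonempty Ω] (P : Ω → Prop) : prob (fun ω => ¬P ω) = 1 - prob P := by
  classical
  have h : ∀ ω, ((if ¬P ω then (1 : ℝ) else 0) + if P ω then 1 else 0) = 1 := fun ω => by
    by_cases hP : P ω <;> simp [hP]
  rw [prob_eq_sum, prob_eq_sum, eq_sub_iff_add_eq, ← add_div, ← sum_add_distrib]
  simp only [h, sum_const, card_univ, nsmul_eq_mul, mul_one]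
  exact div_self (by positivity)

lemma prob_comp_equiv (e : α ≃ β) (P : β → Prop) : prob (fun a => P (e a)) = prob P := by
  classical
  rw [prob_eq_sum, prob_eq_sum, Fintype.card_congr e]
  congr 1
  exact e.sum_comp fun b => if P b then (1 : ℝ) else 0

lemma prob_prod_eq_sum_fst (P : α → β → Prop) :
    prob (fun w : α × β => P w.1 w.2) = (∑ a, prob (P a)) / Fintype.card α := by
  classical
  simp only [prob_eq_sum, Fintype.sum_prod_type, Fintype.card_prod, ← sum_div]
  rw [div_div]
  push_cast
  ring

lemma prob_prod_eq_sum_snd (P : α → β → Prop) :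
    prob (fun w : α × β => P w.1 w.2) = (∑ b, prob (fun a => P a b)) / Fintype.card β := by
  rw [← prob_prod_eq_sum_fst, ← prob_comp_equiv (Equiv.prodComm α β)]
  rfl

lemma prob_comp_snd [Nonempty α] (P : β → Prop) : prob (fun w : α × β => P w.2) = prob P := by
  rw [prob_prod_eq_sum_fst (fun _ => P), sum_const, card_univ, nsmul_eq_mul,
    mul_div_cancel_left₀ _ (by positivity)]

lemma prob_comp_fst [Nonempty β] (P : α → Prop) : prob (fun w : α × β => P w.1) = prob P := by
  rw [prob_prod_eq_sum_snd (fun a _ => P a), sum_const, card_univ, nsmul_eq_mul,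
    mul_div_cancel_left₀ _ (by positivity)]

lemma prob_prod_fst_snd [Nonempty α'] (P : α → β → Prop) :
    prob (fun w : (α × α') × β => P w.1.1 w.2) = prob (fun v : α × β => P v.1 v.2) := by
  rw [← prob_comp_snd (α := α') (fun v : α × β => P v.1 v.2),
    ← prob_comp_equiv ((Equiv.prodComm α α').prodCongr (Equiv.refl β) |>.trans
      (Equiv.prodAssoc α' α β))]
  rfl

lemma prob_prod_snd_snd [Nonempty α] (P : α' → β → Prop) :
    prob (fun w : (α × α') × β => P w.1.2 w.2) = prob (fun v : α' × β => P v.1 v.2) := by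
  rw [← prob_comp_snd (α := α) (fun v : α' × β => P v.1 v.2),
    ← prob_comp_equiv (Equiv.prodAssoc α α' β)]
  rfl

end Prob

section Bernstein

open Real

lemma exp_le_one_add_add_sq {x : ℝ} (hx : x ≤ 3 / 2) : exp x ≤ 1 + x + x ^ 2 := by
  rcases le_total x 0 with hneg | hpos
  · -- `exp x ≤ 1 / (1 - x) ≤ 1 + x + x ^ 2`
    have h1 := add_one_le_exp (-x)
    have h2 : exp x * exp (-x) = 1 := by rw [← exp_add, add_neg_cancel, exp_zero]
    nlinarith [exp_pos x]
  · -- square the second-order Taylor bound at `x / 2`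
    have hy : |x / 2| ≤ 1 := by rw [abs_le]; constructor <;> linarith
    have hb : exp (x / 2) ≤ 1 + x / 2 + 3 / 4 * (x / 2) ^ 2 := by
      have := (abs_le.mp (Real.exp_bound hy (n := 2) (by norm_num))).2
      simp only [sum_range_succ, range_zero, sum_empty, Nat.factorial,
        abs_of_nonneg (by linarith : 0 ≤ x / 2)] at this
      norm_num at this
      linarith
    calc exp x = exp (x / 2) ^ 2 := by rw [← exp_nat_mul]; ring_nf
      _ ≤ (1 + x / 2 + 3 / 4 * (x / 2) ^ 2) ^ 2 := by gcongr
      _ ≤ 1 + x + x ^ 2 := by nlinarith [mul_nonneg (mul_nonneg hpos hpos) (sub_nonneg.2 hx)]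

variable {I : Type*} [Fintype I]

lemma prob_le_exp_mul_sum_pow (W : I → ℝ) (c : ℝ) {l : ℝ} (hl : 0 ≤ l) (n : ℕ) :
    prob (fun s : Fin n → I => c ≤ ∑ i, W (s i)) ≤
      exp (-(l * c)) * ((∑ ω, exp (l * W ω)) / Fintype.card I) ^ n := by
  classical
  have hind : ∀ s : Fin n → I, (if c ≤ ∑ i, W (s i) then (1 : ℝ) else 0) ≤
      exp (-(l * c)) * ∏ i, exp (l * W (s i)) := by
    intro s
    rw [← exp_sum, ← exp_add, ← mul_sum]
    split_ifs with h
    · exact one_le_exp (by nlinarith)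
    · exact (exp_pos _).le
  rw [prob_eq_sum, div_pow, Fintype.card_fun, Fintype.card_fin, Nat.cast_pow, mul_div_assoc',
    sum_pow', Fintype.piFinset_univ, mul_sum]
  gcongr with s
  exact hind s

lemma sum_exp_mul_sub_mean_div_card_le [Nonempty I] {Z : I → ℝ} {M v l : ℝ} (hM : ∀ ω, |Z ω| ≤ M)
    (hv : ∑ ω, Z ω ^ 2 ≤ v * Fintype.card I) (hl : 0 ≤ l) (hlM : l * M ≤ 3 / 2) :
    (∑ ω, exp (l * (Z ω - (∑ ω, Z ω) / Fintype.card I))) / Fintype.card I ≤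
      exp (l ^ 2 * v) := by
  set N : ℝ := (Fintype.card I : ℝ)
  set μ := (∑ ω, Z ω) / N
  have hN : 0 < N := by positivity
  have hpt : ∀ ω, exp (l * Z ω) ≤ 1 + l * Z ω + (l * Z ω) ^ 2 := fun ω =>
    exp_le_one_add_add_sq (by nlinarith [le_abs_self (Z ω), hM ω])
  have hsum : ∑ ω, exp (l * Z ω) ≤ N * (1 + l * μ + l ^ 2 * v) := calc
    _ ≤ ∑ ω, (1 + l * Z ω + (l * Z ω) ^ 2) := sum_le_sum fun ω _ => hpt ω
    _ = N + l * (N * μ) + l ^ 2 * ∑ ω, Z ω ^ 2 := by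
        simp only [sum_add_distrib, mul_pow, ← mul_sum, sum_const, card_univ, nsmul_eq_mul,
          mul_one, μ]
        field_simp
        rfl
    _ ≤ N + l * (N * μ) + l ^ 2 * (v * N) := by gcongr
    _ = N * (1 + l * μ + l ^ 2 * v) := by ring
  calc (∑ ω, exp (l * (Z ω - μ))) / N = exp (-(l * μ)) * (∑ ω, exp (l * Z ω)) / N := by
        rw [mul_sum]
        congr 1
        exact sum_congr rfl fun ω _ => by rw [← exp_add]; ring_nf
    _ ≤ exp (-(l * μ)) * (N * (1 + l * μ + l ^ 2 * v)) / N := by gcongr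
    _ = exp (-(l * μ)) * (1 + l * μ + l ^ 2 * v) := by field_simp
    _ ≤ exp (-(l * μ)) * exp (l * μ + l ^ 2 * v) := by
        gcongr
        linarith [add_one_le_exp (l * μ + l ^ 2 * v)]
    _ = exp (l ^ 2 * v) := by rw [← exp_add]; ring_nf

lemma exists_bernstein_exponent {M v t : ℝ} (hM : 0 < M) (hv : 0 < v) (ht : 0 ≤ t) :
    ∃ l, 0 ≤ l ∧ l * M ≤ 3 / 2 ∧
      (l ^ 2 * v - l * t = -t ^ 2 / (4 * v) ∨ l ^ 2 * v - l * t ≤ -(3 * t) / (4 * M)) := by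
  rcases le_total (t / (2 * v)) (3 / (2 * M)) with h | h
  · refine ⟨t / (2 * v), by positivity, ?_, Or.inl (by field_simp; ring)⟩
    calc t / (2 * v) * M ≤ 3 / (2 * M) * M := by gcongr
      _ = 3 / 2 := by field_simp
  · refine ⟨3 / (2 * M), by positivity, le_of_eq (by field_simp), Or.inr ?_⟩
    rw [div_le_div_iff₀ (by positivity) (by positivity)] at h
    rw [← sub_nonneg]
    field_simp
    nlinarith

theorem prob_bernstein [Nonempty I] (Z : I → ℝ) {M v t : ℝ} (hM : ∀ ω, |Z ω| ≤ M)
    (hv : ∑ ω, Z ω ^ 2 ≤ v * Fintype.card I) (ht : 0 ≤ t) {n : ℕ} (hn : 0 < n) :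
    prob (fun s : Fin n → I => t ≤ (∑ i, Z (s i)) / n - (∑ ω, Z ω) / Fintype.card I) ≤
      exp (-(n * t ^ 2) / (4 * v)) + exp (-(3 * n * t) / (4 * M)) := by
  have hM0 : 0 ≤ M := (abs_nonneg _).trans (hM (Classical.arbitrary I))
  have hv0 : 0 ≤ v := nonneg_of_mul_nonneg_left
    ((sum_nonneg fun ω _ => sq_nonneg (Z ω)).trans hv) (by positivity)
  -- if `M = 0` or `v = 0` an exponent is divided by zero, so that term is `exp 0 = 1`
  rcases hM0.eq_or_lt with rfl | hMpos
  · simpa using (prob_le_one _).trans (le_add_of_nonneg_left (exp_pos _).le)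
  rcases hv0.eq_or_lt with rfl | hvpos
  · simpa using (prob_le_one _).trans (le_add_of_nonneg_right (exp_pos _).le)
  obtain ⟨l, hl, hlM, hexp⟩ := exists_bernstein_exponent hMpos hvpos ht
  set μ := (∑ ω, Z ω) / Fintype.card I
  have hn' : (0 : ℝ) < n := by exact_mod_cast hn
  calc _ ≤ prob (fun s : Fin n → I => n * t ≤ ∑ i, (Z (s i) - μ)) := prob_mono fun s hs => by
        rw [sum_sub_distrib, sum_const, card_univ, Fintype.card_fin, nsmul_eq_mul]
        rw [le_sub_iff_add_le, le_div_iff₀ hn'] at hs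
        linarith
    _ ≤ exp (-(l * (n * t))) * ((∑ ω, exp (l * (Z ω - μ))) / Fintype.card I) ^ n :=
        prob_le_exp_mul_sum_pow (fun ω => Z ω - μ) (n * t) hl n
    _ ≤ exp (-(l * (n * t))) * exp (l ^ 2 * v) ^ n := by
        gcongr
        exact sum_exp_mul_sub_mean_div_card_le hM hv hl hlM
    _ = exp (n * (l ^ 2 * v - l * t)) := by rw [← exp_nat_mul, ← exp_add]; ring_nf
    _ ≤ _ := by
        rcases hexp with h | h
        · have : n * (l ^ 2 * v - l * t) = -(n * t ^ 2) / (4 * v) := by rw [h]; ring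
          rw [this]
          exact le_add_of_nonneg_right (exp_pos _).le
        · refine le_add_of_nonneg_of_le (exp_pos _).le (exp_le_exp.mpr ?_)
          calc n * (l ^ 2 * v - l * t) ≤ n * (-(3 * t) / (4 * M)) := by gcongr
            _ = -(3 * n * t) / (4 * M) := by ring

end Bernstein

section Sampling

open Real

lemma abs_le_maxNorm (A : Tensor d) (a : ∀ j, Fin (d j)) : |A a| ≤ maxNorm A :=
  le_ciSup (f := fun a => |A a|) (Set.finite_range _).bddAbove a

lemma card_pi_fin_eq_prod (d : Fin k → ℕ) :
    (Fintype.card (∀ j, Fin (d j)) : ℝ) = ∏ j, (d j : ℝ) := by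
  simp [Fintype.card_pi]

lemma tinner_sampleAvg_sub [Nonempty (∀ j, Fin (d j))] (Y A : Tensor d) (n : ℕ)
    (s : Fin n → ∀ j, Fin (d j)) :
    tinner Y (sampleAvg A n s - A) =
      (∑ i, (∏ j, (d j : ℝ)) * (Y (s i) * A (s i))) / n -
        (∑ a, (∏ j, (d j : ℝ)) * (Y a * A a)) / Fintype.card (∀ j, Fin (d j)) := by
  have hD : (Fintype.card (∀ j, Fin (d j)) : ℝ) ≠ 0 := by positivity
  have hsample :
      tinner Y (sampleAvg A n s) = (∑ i, (∏ j, (d j : ℝ)) * (Y (s i) * A (s i))) / n := by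
    simp only [tinner, sampleAvg, Pentry, mul_sum, sum_div]
    rw [sum_comm]
    refine sum_congr rfl fun i _ => ?_
    simp only [mul_ite, mul_zero, sum_ite_eq', mem_univ, if_true]
    ring
  have hmean : tinner Y A = (∑ a, (∏ j, (d j : ℝ)) * (Y a * A a)) /
      Fintype.card (∀ j, Fin (d j)) := by
    rw [← mul_sum, ← card_pi_fin_eq_prod, mul_div_cancel_left₀ _ hD]
    rfl
  rw [tinner_sub_right, hsample, hmean]

theorem prob_le_tinner_sampleAvg_sub_le {δ : Fin k → ℝ} (hδ : ∀ j, 0 ≤ δ j) {c : ℝ}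
    (hc : 0 < c) (hcδ : ∀ j1 j2, j1 ≠ j2 → c ^ 2 ≤ δ j1 * δ j2) {Y : Tensor d} (hY : Y ∈ Uset δ)
    [Nonempty (∀ j, Fin (d j))] (A : Tensor d) {n : ℕ} (hn : 0 < n) {t : ℝ} (ht : 0 ≤ t) :
    prob (fun s : Fin n → ∀ j, Fin (d j) => t ≤ tinner Y (sampleAvg A n s - A)) ≤
      exp (-(n * t ^ 2) / (4 * (∏ j, (d j : ℝ)) * maxNorm A ^ 2)) +
      exp (-((3 / 4) * c ^ 2 * n * t) / ((∏ j, (d j : ℝ)) * (∏ j, δ j) * maxNorm A)) := by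
  set D := ∏ j, (d j : ℝ)
  have hD : (Fintype.card (∀ j, Fin (d j)) : ℝ) = D := card_pi_fin_eq_prod d
  have hD0 : 0 ≤ D := by rw [← hD]; positivity
  set Z : (∀ j, Fin (d j)) → ℝ := fun a => D * (Y a * A a)
  obtain ⟨j1, j2, h12, hYδ⟩ := exists_abs_mul_le_prod_of_mem_Uset hδ hY
  have hM : ∀ a, |Z a| ≤ D * (∏ j, δ j) * maxNorm A / c ^ 2 := fun a => by
    have hYa : |Y a| * c ^ 2 ≤ ∏ j, δ j :=
      (mul_le_mul_of_nonneg_left (hcδ j1 j2 h12) (abs_nonneg _)).trans (hYδ a)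
    rw [le_div_iff₀ (by positivity)]
    calc |Z a| * c ^ 2 = D * (|Y a| * c ^ 2) * |A a| := by
          simp only [Z, abs_mul, abs_of_nonneg hD0]; ring
      _ ≤ D * (∏ j, δ j) * maxNorm A :=
          mul_le_mul (mul_le_mul_of_nonneg_left hYa hD0) (abs_le_maxNorm A a) (abs_nonneg _)
            (mul_nonneg hD0 (prod_nonneg fun j _ => hδ j))
  have hv : ∑ a, Z a ^ 2 ≤ D * maxNorm A ^ 2 * Fintype.card (∀ j, Fin (d j)) := by
    rw [hD]
    calc ∑ a, Z a ^ 2 = D ^ 2 * ∑ a, A a ^ 2 * Y a ^ 2 := by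
          rw [mul_sum]; exact sum_congr rfl fun a _ => by ring
      _ ≤ D ^ 2 * ∑ a, maxNorm A ^ 2 * Y a ^ 2 := by
          refine mul_le_mul_of_nonneg_left (sum_le_sum fun a _ => ?_) (sq_nonneg D)
          exact mul_le_mul_of_nonneg_right
            (sq_le_sq.mpr ((abs_le_maxNorm A a).trans (le_abs_self _))) (sq_nonneg _)
      _ ≤ D ^ 2 * (maxNorm A ^ 2 * 1) := by
          rw [← mul_sum]
          gcongr
          exact sum_sq_le_one_of_mem_Uset hY
      _ = D * maxNorm A ^ 2 * D := by ring
  calc _ = prob (fun s : Fin n → ∀ j, Fin (d j) =>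
        t ≤ (∑ i, Z (s i)) / n - (∑ a, Z a) / Fintype.card (∀ j, Fin (d j))) := by
        simp only [tinner_sampleAvg_sub]; rfl
    _ ≤ _ := prob_bernstein Z hM hv ht hn
    _ = _ := by
        congr 2
        · ring
        · rw [← mul_div_assoc, div_div_eq_mul_div]
          ring

end Sampling

section PairSqrt

variable {δ : Fin k → ℝ}

lemma sInf_sqrt_mul_pos (hk : 2 ≤ k) (hδ : ∀ j, 0 < δ j) :
    0 < sInf {x | ∃ j1 j2 : Fin k, j1 < j2 ∧ x = Real.sqrt (δ j1 * δ j2)} := by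
  set S := {x | ∃ j1 j2 : Fin k, j1 < j2 ∧ x = Real.sqrt (δ j1 * δ j2)}
  have hfin : S.Finite := (Set.finite_range fun p : Fin k × Fin k =>
    Real.sqrt (δ p.1 * δ p.2)).subset fun x ⟨j1, j2, _, hx⟩ => ⟨(j1, j2), hx.symm⟩
  have hne : S.Nonempty :=
    ⟨_, ⟨0, by omega⟩, ⟨1, by omega⟩, Fin.mk_lt_mk.mpr one_pos, rfl⟩
  obtain ⟨j1, j2, -, hx⟩ := hne.csInf_mem hfin
  rw [hx]
  exact Real.sqrt_pos.mpr (mul_pos (hδ j1) (hδ j2))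

lemma sq_sInf_sqrt_mul_le (hδ : ∀ j, 0 ≤ δ j) {j1 j2 : Fin k} (h : j1 ≠ j2) :
    sInf {x | ∃ j1 j2 : Fin k, j1 < j2 ∧ x = Real.sqrt (δ j1 * δ j2)} ^ 2 ≤ δ j1 * δ j2 := by
  have hbdd : BddBelow {x | ∃ j1 j2 : Fin k, j1 < j2 ∧ x = Real.sqrt (δ j1 * δ j2)} :=
    ⟨0, fun x ⟨_, _, _, hx⟩ => hx ▸ Real.sqrt_nonneg _⟩
  have hle : sInf {x | ∃ j1 j2 : Fin k, j1 < j2 ∧ x = Real.sqrt (δ j1 * δ j2)} ≤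
      Real.sqrt (δ j1 * δ j2) := by
    rcases h.lt_or_gt with h12 | h21
    · exact csInf_le hbdd ⟨j1, j2, h12, rfl⟩
    · exact csInf_le hbdd ⟨j2, j1, h21, by rw [mul_comm]⟩
  calc _ ≤ Real.sqrt (δ j1 * δ j2) ^ 2 :=
        pow_le_pow_left₀ (Real.sInf_nonneg <| by rintro x ⟨-, -, -, rfl⟩; positivity) hle 2
    _ = δ j1 * δ j2 := Real.sq_sqrt (mul_nonneg (hδ j1) (hδ j2))

end PairSqrt

section SignSwap

variable {n : ℕ}

def swapWhere {β : Type*} (ε : Fin n → Bool) (q : (Fin n → β) × (Fin n → β)) :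
    (Fin n → β) × (Fin n → β) :=
  (fun i => if ε i then q.1 i else q.2 i, fun i => if ε i then q.2 i else q.1 i)

lemma swapWhere_involutive {β : Type*} (ε : Fin n → Bool) :
    Function.Involutive (swapWhere (β := β) ε) := fun q => by
  ext i <;> simp only [swapWhere] <;> split_ifs <;> rfl

noncomputable def rademacherAvg (A : Tensor d) (n : ℕ) (s : Fin n → ∀ j, Fin (d j))
    (ε : Fin n → Bool) : Tensor d :=
  fun a => (1 / (n : ℝ)) * ∑ i : Fin n,
    (if ε i then (1 : ℝ) else -1) * ((∏ j, (d j : ℝ)) * Pentry (s i) A a)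

lemma rademacherAvg_swapWhere_sub (A : Tensor d) (ε : Fin n → Bool)
    (q : (Fin n → ∀ j, Fin (d j)) × (Fin n → ∀ j, Fin (d j))) :
    rademacherAvg A n (swapWhere ε q).1 ε - rademacherAvg A n (swapWhere ε q).2 ε =
      sampleAvg A n q.1 - sampleAvg A n q.2 := by
  ext a
  simp only [rademacherAvg, sampleAvg, swapWhere, Pi.sub_apply, ← mul_sub, ← sum_sub_distrib]
  congr 1
  refine sum_congr rfl fun i _ => ?_
  by_cases h : ε i <;> simp only [h, if_true, if_false, Bool.false_eq_true] <;> ring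

lemma prob_sampleAvg_sub_eq_prob_rademacherAvg_sub (A : Tensor d) (P : Tensor d → Prop) :
    prob (fun q : (Fin n → ∀ j, Fin (d j)) × (Fin n → ∀ j, Fin (d j)) =>
        P (sampleAvg A n q.1 - sampleAvg A n q.2)) =
      prob (fun w : ((Fin n → ∀ j, Fin (d j)) × (Fin n → ∀ j, Fin (d j))) × (Fin n → Bool) =>
        P (rademacherAvg A n w.1.1 w.2 - rademacherAvg A n w.1.2 w.2)) := by
  have hswap : ∀ ε : Fin n → Bool,
      prob (fun q : (Fin n → ∀ j, Fin (d j)) × (Fin n → ∀ j, Fin (d j)) =>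
        P (rademacherAvg A n q.1 ε - rademacherAvg A n q.2 ε)) =
      prob (fun q : (Fin n → ∀ j, Fin (d j)) × (Fin n → ∀ j, Fin (d j)) =>
        P (sampleAvg A n q.1 - sampleAvg A n q.2)) := fun ε => by
    rw [← prob_comp_equiv (swapWhere_involutive ε).toPerm]
    simp only [Function.Involutive.coe_toPerm, rademacherAvg_swapWhere_sub]
  rw [prob_prod_eq_sum_snd (fun (q : (Fin n → ∀ j, Fin (d j)) × (Fin n → ∀ j, Fin (d j))) ε =>
    P (rademacherAvg A n q.1 ε - rademacherAvg A n q.2 ε))]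
  simp only [hswap, sum_const, card_univ, nsmul_eq_mul]
  rw [mul_div_cancel_left₀ _ (by positivity)]

end SignSwap

section Symmetrization

variable {δ : Fin k → ℝ}

lemma one_sub_le_prob_lt_onorm_sub (hk : 2 ≤ k) (hδ : ∀ j, 0 ≤ δ j) {S : Type*} [Fintype S]
    [Nonempty S] {f : S → Tensor d} {p t u : ℝ}
    (hB : ∀ Y ∈ Uset δ, prob (fun s => t ≤ tinner Y (f s)) ≤ p) {x : Tensor d}
    (hx : u ≤ onorm δ x) :
    1 - p ≤ prob (fun s => u - t < onorm δ (x - f s)) := by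
  obtain ⟨Y, hY, hYx⟩ := exists_tinner_eq_onorm hk hδ x
  calc 1 - p ≤ 1 - prob (fun s => t ≤ tinner Y (f s)) := by linarith [hB Y hY]
    _ = prob (fun s => ¬t ≤ tinner Y (f s)) := (prob_not _).symm
    _ ≤ _ := prob_mono fun s hs => by
        have := le_onorm hδ hY (x - f s)
        rw [tinner_sub_right] at this
        linarith [not_le.mp hs]

lemma one_sub_mul_prob_le_prob_lt_onorm_sub (hk : 2 ≤ k) (hδ : ∀ j, 0 ≤ δ j) {S : Type*}
    [Fintype S] [Nonempty S] (f : S → Tensor d) {p t : ℝ}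
    (hB : ∀ Y ∈ Uset δ, prob (fun s => t ≤ tinner Y (f s)) ≤ p) (u : ℝ) :
    (1 - p) * prob (fun s => u ≤ onorm δ (f s)) ≤
      prob (fun q : S × S => u - t < onorm δ (f q.1 - f q.2)) := by
  classical
  rw [prob_prod_eq_sum_fst (fun s s' => u - t < onorm δ (f s - f s')), prob_eq_sum,
    mul_div_assoc', mul_sum]
  gcongr with s
  split_ifs with h
  · simpa using one_sub_le_prob_lt_onorm_sub hk hδ hB h
  · simpa using prob_nonneg _

lemma prob_two_mul_lt_onorm_sub_le (hk : 2 ≤ k) (hδ : ∀ j, 0 ≤ δ j) {S E : Type*} [Fintype S]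
    [Fintype E] [Nonempty S] (F : S → E → Tensor d) (t : ℝ) :
    prob (fun w : (S × S) × E => 2 * t < onorm δ (F w.1.1 w.2 - F w.1.2 w.2)) ≤
      2 * prob (fun w : S × E => t ≤ onorm δ (F w.1 w.2)) := by
  calc _ ≤ prob (fun w : (S × S) × E => t ≤ onorm δ (F w.1.1 w.2) ∨ t ≤ onorm δ (F w.1.2 w.2)) :=
        prob_mono fun w hw => by
          by_contra! h
          linarith [onorm_sub_le hk hδ (F w.1.1 w.2) (F w.1.2 w.2)]
    _ ≤ _ := prob_or_le _ _
    _ = _ := by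
        rw [prob_prod_fst_snd (fun s ε => t ≤ onorm δ (F s ε)),
          prob_prod_snd_snd (fun s ε => t ≤ onorm δ (F s ε))]
        ring

theorem one_sub_mul_prob_onorm_sampleAvg_sub_le (hk : 2 ≤ k) (hδ : ∀ j, 0 ≤ δ j)
    [Nonempty (∀ j, Fin (d j))] (A : Tensor d) (n : ℕ) {p t : ℝ}
    (hB : ∀ Y ∈ Uset δ, prob (fun s : Fin n → ∀ j, Fin (d j) =>
      t ≤ tinner Y (sampleAvg A n s - A)) ≤ p) :
    (1 - p) * prob (fun s : Fin n → ∀ j, Fin (d j) => 3 * t ≤ onorm δ (sampleAvg A n s - A)) ≤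
      2 * prob (fun w : (Fin n → ∀ j, Fin (d j)) × (Fin n → Bool) =>
        t ≤ onorm δ (rademacherAvg A n w.1 w.2)) := by
  calc _ ≤ prob (fun q : (Fin n → ∀ j, Fin (d j)) × (Fin n → ∀ j, Fin (d j)) =>
        3 * t - t < onorm δ ((sampleAvg A n q.1 - A) - (sampleAvg A n q.2 - A))) :=
        one_sub_mul_prob_le_prob_lt_onorm_sub hk hδ (fun s => sampleAvg A n s - A) hB _
    _ = prob (fun w : ((Fin n → ∀ j, Fin (d j)) × (Fin n → ∀ j, Fin (d j))) × (Fin n → Bool) =>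
        2 * t < onorm δ (rademacherAvg A n w.1.1 w.2 - rademacherAvg A n w.1.2 w.2)) := by
        simp only [sub_sub_sub_cancel_right, show 3 * t - t = 2 * t by ring]
        exact prob_sampleAvg_sub_eq_prob_rademacherAvg_sub A (fun X => 2 * t < onorm δ X)
    _ ≤ _ := prob_two_mul_lt_onorm_sub_le hk hδ (rademacherAvg A n) t

end Symmetrization

/-- symmetrization step in the proof of Theorem 2: over the joint sample
space of the uniform indices `ω_i` and independent Rademacher signs `ε_i`,
`P{‖X̄−A‖_{∘,δ} ≥ 3t}` is controlled by two Bernstein terms plus four times the probability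
that the Rademacher average exceeds `t`. -/
theorem statement7 {k : ℕ} (hk : 2 ≤ k) {d : Fin k → ℕ} (hd : ∀ j, 0 < d j)
    (δ : Fin k → ℝ) (hδ : ∀ j, δ j ∈ Set.Ioc (0 : ℝ) 1)
    (A : Tensor d) (n : ℕ) (hn : 0 < n)
    (dstar δstar δss : ℝ)
    (hdstar : dstar = (∏ j, (d j : ℝ)) ^ ((1 : ℝ) / k))
    (hδstar : δstar = (∏ j, δ j) ^ ((1 : ℝ) / k))
    (hδss : δss = sInf {x | ∃ j1 j2 : Fin k, j1 < j2 ∧ x = Real.sqrt (δ j1 * δ j2)})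
    (t : ℝ) (ht : 0 < t) :
    prob (fun w : (Fin n → ∀ j, Fin (d j)) × (Fin n → Bool) =>
        onorm δ (sampleAvg A n w.1 - A) ≥ 3 * t) ≤
      Real.exp (-((n : ℝ) * t ^ 2) / (4 * dstar ^ k * maxNorm A ^ 2))
      + Real.exp (-((3 / 4) * δss ^ 2 * n * t) / (dstar ^ k * δstar ^ k * maxNorm A))
      + 4 * prob (fun w : (Fin n → ∀ j, Fin (d j)) × (Fin n → Bool) =>
          onorm δ (fun a => (1 / (n : ℝ)) * ∑ i : Fin n,
              (if w.2 i then (1 : ℝ) else -1) * ((∏ j, (d j : ℝ)) * Pentry (w.1 i) A a))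
            ≥ t) := by
  have : Nonempty (∀ j, Fin (d j)) := ⟨fun j => ⟨0, hd j⟩⟩
  have hδ0 : ∀ j, 0 ≤ δ j := fun j => (hδ j).1.le
  have hdk : dstar ^ k = ∏ j, (d j : ℝ) := by
    rw [hdstar, one_div, Real.rpow_inv_natCast_pow (by positivity) (by omega)]
  have hδk : δstar ^ k = ∏ j, δ j := by
    rw [hδstar, one_div, Real.rpow_inv_natCast_pow (prod_nonneg fun j _ => hδ0 j) (by omega)]
  set p := Real.exp (-((n : ℝ) * t ^ 2) / (4 * dstar ^ k * maxNorm A ^ 2))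
    + Real.exp (-((3 / 4) * δss ^ 2 * n * t) / (dstar ^ k * δstar ^ k * maxNorm A)) with hp
  have hB : ∀ Y ∈ Uset δ,
      prob (fun s : Fin n → ∀ j, Fin (d j) => t ≤ tinner Y (sampleAvg A n s - A)) ≤ p := by
    intro Y hY
    rw [hp, hdk, hδk]
    exact prob_le_tinner_sampleAvg_sub_le hδ0 (hδss ▸ sInf_sqrt_mul_pos hk fun j => (hδ j).1)
      (fun j1 j2 h => hδss ▸ sq_sInf_sqrt_mul_le hδ0 h) hY A hn ht.le
  have hsymm := one_sub_mul_prob_onorm_sampleAvg_sub_le hk hδ0 A n hB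
  have hp0 : 0 ≤ p := by positivity
  rw [prob_comp_fst (fun s => 3 * t ≤ onorm δ (sampleAvg A n s - A))]
  show _ ≤ p + 4 * prob (fun w : (Fin n → ∀ j, Fin (d j)) × (Fin n → Bool) =>
    t ≤ onorm δ (rademacherAvg A n w.1 w.2))
  nlinarith [prob_le_one (fun s : Fin n → ∀ j, Fin (d j) => 3 * t ≤ onorm δ (sampleAvg A n s - A)),
    prob_nonneg (fun w : (Fin n → ∀ j, Fin (d j)) × (Fin n → Bool) =>
      t ≤ onorm δ (rademacherAvg A n w.1 w.2))]

end IncoherentTensor
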